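/- Let p be an odd prime not dividing a, k ∈ K_f, and e a nonnegative integer with d_{p^e} ≤ k < d_{p^{e+1}}. Then max_{1 ≤ i ≤ k} v_p(a^2 i^2 - D) = v_p(a^2 d_{p^e}^2 - D) = e. -/
import Mathlib


/-- The set of solutions of `f(x) ≡ 0 (mod pᵉ)` in `[1, pᵉ]`. -/
def solSet (f : ℤ → ℤ) (p e : ℕ) : Set ℤ :=
  {x | 1 ≤ x ∧ x ≤ (p : ℤ)^e ∧ (p : ℤ)^e ∣ f x}

/-- The representative `⟨y⟩ₘ ∈ [1, m]` of `y` modulo `m`. -/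
def rep (m y : ℤ) : ℤ := if y % m = 0 then m else y % m

/-- The distance between two roots modulo `m`:
`min(⟨x₁ - x₂⟩ₘ, ⟨x₂ - x₁⟩ₘ)` (equal to `m` when `x₁ = x₂`). -/
def pairDist (m x₁ x₂ : ℤ) : ℤ := min (rep m (x₁ - x₂)) (rep m (x₂ - x₁))

/-- The minimal distance `d_{pᵉ}` among the roots of `f(x) ≡ 0 (mod pᵉ)`:
`1` for `e = 0`, the minimum of all pairwise distances when the solution set
is nonempty, and `∞` (the infimum of the empty set) when it is empty. -/
noncomputable def minDist (f : ℤ → ℤ) (p e : ℕ) : ℕ∞ :=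
  if e = 0 then 1
  else sInf {d : ℕ∞ | ∃ x₁ ∈ solSet f p e, ∃ x₂ ∈ solSet f p e,
    d = ((pairDist ((p : ℤ)^e) x₁ x₂).toNat : ℕ∞)}

/- ### Auxiliary lemmas -/

lemma cast_pow_dvd_iff {p E : ℕ} {z : ℤ} : (p:ℤ)^E ∣ z ↔ p^E ∣ z.natAbs := by
  rw [← Int.natAbs_dvd_natAbs]
  simp [Int.natAbs_pow]

lemma pow_dvd_of_dvd_sq {p : ℕ} (hp : p.Prime) {E : ℕ} {y : ℤ}
    (h : (p:ℤ)^E ∣ y^2) : (p:ℤ)^((E+1)/2) ∣ y := by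
  rcases eq_or_ne y 0 with rfl | hy
  · simp
  have hn : y.natAbs ≠ 0 := by simpa using hy
  rw [cast_pow_dvd_iff] at h ⊢
  rw [Int.natAbs_pow] at h
  rw [hp.pow_dvd_iff_le_factorization (pow_ne_zero 2 hn),
    Nat.factorization_pow, Finsupp.smul_apply, smul_eq_mul] at h
  rw [hp.pow_dvd_iff_le_factorization hn]
  omega

lemma pow_dvd_of_dvd_mul {p : ℕ} (hp : p.Prime) {E β : ℕ} {X Y : ℤ}
    (h : (p:ℤ)^E ∣ X * Y) (hX : ¬ (p:ℤ)^(β+1) ∣ X) : (p:ℤ)^(E-β) ∣ Y := by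
  have hX0 : X ≠ 0 := by rintro rfl; exact hX (dvd_zero _)
  rcases eq_or_ne Y 0 with rfl | hY0
  · simp
  have hx : X.natAbs ≠ 0 := by simpa using hX0
  have hy : Y.natAbs ≠ 0 := by simpa using hY0
  rw [cast_pow_dvd_iff] at h hX ⊢
  rw [Int.natAbs_mul] at h
  rw [hp.pow_dvd_iff_le_factorization (mul_ne_zero hx hy),
    Nat.factorization_mul hx hy, Finsupp.add_apply] at h
  rw [hp.pow_dvd_iff_le_factorization hx] at hX
  rw [hp.pow_dvd_iff_le_factorization hy]
  omega

lemma not_pow_succ_dvd_sq {p : ℕ} (hp : p.Prime) {β : ℕ} {y : ℤ}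
    (hy : ¬ (p:ℤ)^(β+1) ∣ y) : ¬ (p:ℤ)^(2*β+1) ∣ y^2 := by
  have hy0 : y ≠ 0 := by rintro rfl; exact hy (dvd_zero _)
  have hn : y.natAbs ≠ 0 := by simpa using hy0
  rw [cast_pow_dvd_iff] at hy ⊢
  rw [Int.natAbs_pow, hp.pow_dvd_iff_le_factorization (pow_ne_zero 2 hn),
    Nat.factorization_pow, Finsupp.smul_apply, smul_eq_mul]
  rw [hp.pow_dvd_iff_le_factorization hn] at hy
  omega

lemma rep_one_le {m y : ℤ} (hm : 0 < m) : 1 ≤ rep m y := by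
  unfold rep; split
  · omega
  · have := Int.emod_nonneg y hm.ne'
    omega

lemma rep_le {m y : ℤ} (hm : 0 < m) : rep m y ≤ m := by
  unfold rep; split
  · exact le_refl m
  · have := Int.emod_lt_of_pos y hm
    omega

lemma rep_dvd_sub (m y : ℤ) : m ∣ rep m y - y := by
  unfold rep; split
  · next h =>
    exact dvd_sub (dvd_refl m) (Int.dvd_of_emod_eq_zero h)
  · exact ⟨-(y/m), by rw [Int.emod_def]; ring⟩

lemma rep_eq {m y r : ℤ} (hm : 0 < m) (h1 : 1 ≤ r) (h2 : r ≤ m)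
    (hmod : m ∣ y - r) : rep m y = r := by
  have key : y % m = r % m := Int.modEq_iff_dvd.mpr (dvd_sub_comm.mp hmod)
  rcases eq_or_lt_of_le h2 with rfl | hlt
  · unfold rep
    rw [key, Int.emod_self, if_pos rfl]
  · have hr : r % m = r := Int.emod_eq_of_lt (by omega) hlt
    unfold rep
    rw [key, hr, if_neg (by omega)]

lemma rep_le_self {m y : ℤ} (hm : 0 < m) (hy : 1 ≤ y) : rep m y ≤ y := by
  unfold rep; split
  · next h => exact Int.le_of_dvd (by omega) (Int.dvd_of_emod_eq_zero h)
  · rcases lt_or_ge y m with h | h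
    · rw [Int.emod_eq_of_lt (by omega) h]
    · have := Int.emod_lt_of_pos y hm
      omega

lemma one_le_pairDist {m x₁ x₂ : ℤ} (hm : 0 < m) : 1 ≤ pairDist m x₁ x₂ :=
  le_min (rep_one_le hm) (rep_one_le hm)

lemma coprime_pow_two_a {p : ℕ} (hp : p.Prime) (hodd : p ≠ 2) {a : ℤ}
    (hpa : ¬ (p:ℤ) ∣ a) (E : ℕ) : IsCoprime ((p:ℤ)^E) (2*a) := by
  have hpz : Prime (p:ℤ) := Nat.prime_iff_prime_int.mp hp
  have h2 : ¬ (p:ℤ) ∣ 2 := by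
    intro h
    have h' : (p:ℕ) ∣ 2 := by exact_mod_cast h
    exact hodd ((Nat.prime_dvd_prime_iff_eq hp Nat.prime_two).mp h')
  exact (((hpz.coprime_iff_not_dvd).mpr h2).mul_right
    ((hpz.coprime_iff_not_dvd).mpr hpa)).pow_left

lemma coprime_pow_two {p : ℕ} (hp : p.Prime) (hodd : p ≠ 2) (E : ℕ) :
    IsCoprime ((p:ℤ)^E) (2:ℤ) := by
  have hpz : Prime (p:ℤ) := Nat.prime_iff_prime_int.mp hp
  have h2 : ¬ (p:ℤ) ∣ 2 := by
    intro h
    have h' : (p:ℕ) ∣ 2 := by exact_mod_cast h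
    exact hodd ((Nat.prime_dvd_prime_iff_eq hp Nat.prime_two).mp h')
  exact ((hpz.coprime_iff_not_dvd).mpr h2).pow_left

lemma coprime_pow_four_a {p : ℕ} (hp : p.Prime) (hodd : p ≠ 2) {a : ℤ}
    (hpa : ¬ (p:ℤ) ∣ a) (E : ℕ) : IsCoprime ((p:ℤ)^E) (4*a) := by
  have h := (coprime_pow_two hp hodd E).mul_right (coprime_pow_two_a hp hodd hpa E)
  have : (2:ℤ) * (2*a) = 4*a := by ring
  rwa [this] at h

lemma coprime_pow_a {p : ℕ} (hp : p.Prime) {a : ℤ}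
    (hpa : ¬ (p:ℤ) ∣ a) (E : ℕ) : IsCoprime ((p:ℤ)^E) a := by
  have hpz : Prime (p:ℤ) := Nat.prime_iff_prime_int.mp hp
  exact ((hpz.coprime_iff_not_dvd).mpr hpa).pow_left

lemma exists_root (a b c : ℤ) {p : ℕ} (hp : p.Prime) (hodd : p ≠ 2)
    (hpa : ¬ (p:ℤ) ∣ a) (E : ℕ) (y : ℤ)
    (hy : (p:ℤ)^E ∣ y^2 - (b^2 - 4*a*c)) :
    ∃ x ∈ solSet (fun x => a*x^2 + b*x + c) p E,
      (p:ℤ)^E ∣ (2*a*x + b) - y := by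
  obtain ⟨u, v, huv⟩ := coprime_pow_two_a hp hodd hpa E
  set m := (p:ℤ)^E with hmdef
  have hm : 0 < m := pow_pos (by exact_mod_cast hp.pos) E
  refine ⟨rep m (v*(y-b)), ⟨rep_one_le hm, rep_le hm, ?_⟩, ?_⟩
  · -- root property
    show (p:ℤ)^E ∣ a*(rep m (v*(y-b)))^2 + b*(rep m (v*(y-b))) + c
    have key : m ∣ (2*a*(rep m (v*(y-b))) + b) - y := by
      obtain ⟨w, hw⟩ := rep_dvd_sub m (v*(y-b))
      exact ⟨2*a*w - u*(y-b), by linear_combination (2*a)*hw + (y-b)*huv⟩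
    have h4 : m ∣ 4*a*(a*(rep m (v*(y-b)))^2 + b*(rep m (v*(y-b))) + c) := by
      have hid : 4*a*(a*(rep m (v*(y-b)))^2 + b*(rep m (v*(y-b))) + c)
          = ((2*a*(rep m (v*(y-b))) + b) - y)*((2*a*(rep m (v*(y-b))) + b) + y)
            + (y^2 - (b^2 - 4*a*c)) := by ring
      rw [hid]
      exact dvd_add (key.mul_right _) hy
    exact (coprime_pow_four_a hp hodd hpa E).dvd_of_dvd_mul_left h4
  · obtain ⟨w, hw⟩ := rep_dvd_sub m (v*(y-b))
    exact ⟨2*a*w - u*(y-b), by linear_combination (2*a)*hw + (y-b)*huv⟩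

lemma minDist_le (f : ℤ → ℤ) (p E : ℕ) (hE : E ≠ 0) {x₁ x₂ : ℤ}
    (h1 : x₁ ∈ solSet f p E) (h2 : x₂ ∈ solSet f p E) :
    minDist f p E ≤ ((pairDist ((p:ℤ)^E) x₁ x₂).toNat : ℕ∞) := by
  rw [minDist, if_neg hE]
  exact sInf_le ⟨x₁, h1, x₂, h2, rfl⟩

lemma minDist_le_of_dvd (a b c : ℤ) {p : ℕ} (hp : p.Prime) (hodd : p ≠ 2)
    (hpa : ¬ (p:ℤ) ∣ a) {E : ℕ} (hE : E ≠ 0) {r : ℕ} (hr : 1 ≤ r)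
    (h : (p:ℤ)^E ∣ a^2 * (r:ℤ)^2 - (b^2 - 4*a*c)) :
    minDist (fun x => a*x^2 + b*x + c) p E ≤ (r : ℕ∞) := by
  set m := (p:ℤ)^E with hmdef
  have hm : 0 < m := pow_pos (by exact_mod_cast hp.pos) E
  obtain ⟨x₁, hx₁, hy₁⟩ := exists_root a b c hp hodd hpa E (a*(r:ℤ))
    (by have : (a*(r:ℤ))^2 - (b^2-4*a*c) = a^2*(r:ℤ)^2 - (b^2-4*a*c) := by ring
        rw [this]; exact h)
  obtain ⟨x₂, hx₂, hy₂⟩ := exists_root a b c hp hodd hpa E (-(a*(r:ℤ)))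
    (by have : (-(a*(r:ℤ)))^2 - (b^2-4*a*c) = a^2*(r:ℤ)^2 - (b^2-4*a*c) := by ring
        rw [this]; exact h)
  have ht : m ∣ (x₁ - x₂) - (r:ℤ) := by
    apply (coprime_pow_two_a hp hodd hpa E).dvd_of_dvd_mul_left
    have hid : (2*a)*((x₁ - x₂) - (r:ℤ))
        = ((2*a*x₁ + b) - a*(r:ℤ)) - ((2*a*x₂ + b) - (-(a*(r:ℤ)))) := by ring
    rw [hid]
    exact dvd_sub hy₁ hy₂
  set r' := rep m (r:ℤ) with hr'def
  have hr'1 : 1 ≤ r' := rep_one_le hm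
  have hr'le : r' ≤ m := rep_le hm
  have hr'r : r' ≤ (r:ℤ) := rep_le_self hm (by exact_mod_cast hr)
  have heq : rep m (x₁ - x₂) = r' := by
    apply rep_eq hm hr'1 hr'le
    have h1 := rep_dvd_sub m (r:ℤ)
    have : (x₁ - x₂) - r' = ((x₁ - x₂) - (r:ℤ)) - (r' - (r:ℤ)) := by ring
    rw [this]
    exact dvd_sub ht h1
  have hpd : pairDist m x₁ x₂ ≤ (r:ℤ) := by
    calc pairDist m x₁ x₂ ≤ rep m (x₁ - x₂) := min_le_left _ _
    _ = r' := heq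
    _ ≤ (r:ℤ) := hr'r
  calc minDist (fun x => a*x^2 + b*x + c) p E
      ≤ ((pairDist m x₁ x₂).toNat : ℕ∞) := minDist_le _ p E hE hx₁ hx₂
    _ ≤ (r : ℕ∞) := by
        have := Int.toNat_le_toNat hpd
        simpa using (Nat.cast_le (α := ℕ∞)).mpr this

/-- Let `p` be an odd prime with `p ∤ a`, `k ∈ K_f` (so `D ≠ a²i²` for
`1 ≤ i ≤ k`), and `e ≥ 0` with `d_{pᵉ} ≤ k < d_{pᵉ⁺¹}`, say `d_{pᵉ} = d`.
Then `max_{1 ≤ i ≤ k} v_p(a²i² - D) = v_p(a²d² - D) = e`: that is,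
`pᵉ ∣ a²d² - D` while `pᵉ⁺¹ ∤ a²i² - D` for every `1 ≤ i ≤ k`. -/
theorem valuation_max_eq (a b c : ℤ) (ha : 1 ≤ a)
    (hprim : Int.gcd a (Int.gcd b c) = 1)
    (p : ℕ) (hp : p.Prime) (hodd : p ≠ 2) (hpa : ¬ (p : ℤ) ∣ a)
    (k : ℕ) (hk : 1 ≤ k)
    (hD : ∀ i : ℕ, 1 ≤ i → i ≤ k → b^2 - 4*a*c ≠ a^2 * (i : ℤ)^2)
    (e : ℕ) (d : ℕ)
    (hd : minDist (fun x => a*x^2 + b*x + c) p e = (d : ℕ∞))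
    (hdk : d ≤ k)
    (hke : (k : ℕ∞) < minDist (fun x => a*x^2 + b*x + c) p (e+1)) :
    (p : ℤ)^e ∣ (a^2 * (d : ℤ)^2 - (b^2 - 4*a*c)) ∧
    ¬ (p : ℤ)^(e+1) ∣ (a^2 * (d : ℤ)^2 - (b^2 - 4*a*c)) ∧
    (∀ i : ℕ, 1 ≤ i → i ≤ k →
      ¬ (p : ℤ)^(e+1) ∣ (a^2 * (i : ℤ)^2 - (b^2 - 4*a*c))) := by
  have part3 : ∀ i : ℕ, 1 ≤ i → i ≤ k →
      ¬ (p : ℤ)^(e+1) ∣ (a^2 * (i : ℤ)^2 - (b^2 - 4*a*c)) := by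
    intro i h1 h2 hdvd
    have hle := minDist_le_of_dvd a b c hp hodd hpa (Nat.succ_ne_zero e) h1 hdvd
    have hik : (i : ℕ∞) ≤ (k : ℕ∞) := by exact_mod_cast h2
    exact absurd hke (not_lt.mpr (le_trans hle hik))
  -- part 1 and positivity of d
  rcases Nat.eq_zero_or_pos e with rfl | hepos
  · have hd1 : d = 1 := by
      have : minDist (fun x => a*x^2 + b*x + c) p 0 = 1 := by rw [minDist, if_pos rfl]
      rw [this] at hd
      exact_mod_cast hd.symm
    refine ⟨by simp, part3 d (by omega) hdk, part3⟩
  have hne : e ≠ 0 := by omega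
  set m := (p:ℤ)^e with hmdef
  have hm : 0 < m := pow_pos (by exact_mod_cast hp.pos) e
  -- extract a minimizing pair
  have hsinf : sInf {dd : ℕ∞ | ∃ x₁ ∈ solSet (fun x => a*x^2 + b*x + c) p e,
      ∃ x₂ ∈ solSet (fun x => a*x^2 + b*x + c) p e,
      dd = ((pairDist ((p : ℤ)^e) x₁ x₂).toNat : ℕ∞)} = (d : ℕ∞) := by
    rw [← hd, minDist, if_neg hne]
  have hlt : sInf {dd : ℕ∞ | ∃ x₁ ∈ solSet (fun x => a*x^2 + b*x + c) p e,
      ∃ x₂ ∈ solSet (fun x => a*x^2 + b*x + c) p e,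
      dd = ((pairDist ((p : ℤ)^e) x₁ x₂).toNat : ℕ∞)} < ((d+1 : ℕ) : ℕ∞) := by
    rw [hsinf]
    exact_mod_cast Nat.lt_succ_self d
  obtain ⟨s, hs, hslt⟩ := sInf_lt_iff.mp hlt
  obtain ⟨x₁, hx₁, x₂, hx₂, rfl⟩ := hs
  have hsge : (d : ℕ∞) ≤ ((pairDist ((p : ℤ)^e) x₁ x₂).toNat : ℕ∞) := by
    rw [← hsinf]
    exact sInf_le ⟨x₁, hx₁, x₂, hx₂, rfl⟩
  have htn : (pairDist ((p : ℤ)^e) x₁ x₂).toNat = d := by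
    have h1 : (pairDist ((p : ℤ)^e) x₁ x₂).toNat < d + 1 := by exact_mod_cast hslt
    have h2 : d ≤ (pairDist ((p : ℤ)^e) x₁ x₂).toNat := by exact_mod_cast hsge
    omega
  have hpd1 : 1 ≤ pairDist m x₁ x₂ := one_le_pairDist hm
  have hpdd : pairDist m x₁ x₂ = (d : ℤ) := by
    rw [← htn]
    exact (Int.toNat_of_nonneg (by omega)).symm
  have hd1 : 1 ≤ d := by
    have : (1:ℤ) ≤ (d:ℤ) := hpdd ▸ hpd1
    exact_mod_cast this
  -- d ≡ ±(x₁ - x₂) mod m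
  have hdt : m ∣ (d:ℤ) - (x₁ - x₂) ∨ m ∣ (d:ℤ) + (x₁ - x₂) := by
    rcases min_cases (rep m (x₁ - x₂)) (rep m (x₂ - x₁)) with ⟨hmin, _⟩ | ⟨hmin, _⟩
    · left
      have := rep_dvd_sub m (x₁ - x₂)
      rw [show rep m (x₁ - x₂) = (d:ℤ) from by rw [← hpdd, pairDist, hmin]] at this
      exact this
    · right
      have := rep_dvd_sub m (x₂ - x₁)
      rw [show rep m (x₂ - x₁) = (d:ℤ) from by rw [← hpdd, pairDist, hmin]] at this
      have h' : (d:ℤ) + (x₁ - x₂) = (d:ℤ) - (x₂ - x₁) := by ring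
      rw [h']
      exact this
  have hdsq : m ∣ (d:ℤ)^2 - (x₁ - x₂)^2 := by
    have hid : (d:ℤ)^2 - (x₁ - x₂)^2 = ((d:ℤ) - (x₁ - x₂)) * ((d:ℤ) + (x₁ - x₂)) := by ring
    rw [hid]
    rcases hdt with h | h
    · exact h.mul_right _
    · exact h.mul_left _
  -- root congruences
  have hy₁ : m ∣ (2*a*x₁ + b)^2 - (b^2 - 4*a*c) := by
    have hroot : m ∣ a*x₁^2 + b*x₁ + c := hx₁.2.2
    have hid : (2*a*x₁ + b)^2 - (b^2 - 4*a*c) = 4*a*(a*x₁^2 + b*x₁ + c) := by ring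
    rw [hid]
    exact hroot.mul_left _
  have hy₂ : m ∣ (2*a*x₂ + b)^2 - (b^2 - 4*a*c) := by
    have hroot : m ∣ a*x₂^2 + b*x₂ + c := hx₂.2.2
    have hid : (2*a*x₂ + b)^2 - (b^2 - 4*a*c) = 4*a*(a*x₂^2 + b*x₂ + c) := by ring
    rw [hid]
    exact hroot.mul_left _
  -- main claim : m ∣ a^2 (x₁-x₂)^2 - D
  have hat : m ∣ a^2*(x₁ - x₂)^2 - (b^2 - 4*a*c) := by
    by_cases hcase : m ∣ (b^2 - 4*a*c)
    · -- v_p(D) ≥ e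
      have h1 : m ∣ (2*a*x₁ + b)^2 := by
        have := dvd_add hy₁ hcase
        simpa using this
      have h2 : m ∣ (2*a*x₂ + b)^2 := by
        have := dvd_add hy₂ hcase
        simpa using this
      have hm1 := pow_dvd_of_dvd_sq hp (hmdef ▸ h1)
      have hm2 := pow_dvd_of_dvd_sq hp (hmdef ▸ h2)
      have hdiff : (p:ℤ)^((e+1)/2) ∣ (2*a*x₁ + b) - (2*a*x₂ + b) := dvd_sub hm1 hm2
      have hsq : m ∣ ((2*a*x₁ + b) - (2*a*x₂ + b))^2 := by
        have h' : ((p:ℤ)^((e+1)/2))^2 ∣ ((2*a*x₁ + b) - (2*a*x₂ + b))^2 :=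
          pow_dvd_pow_of_dvd hdiff 2
        refine dvd_trans ?_ h'
        rw [← pow_mul, hmdef]
        exact pow_dvd_pow _ (by omega)
      have h4 : m ∣ 4*(a^2*(x₁ - x₂)^2 - (b^2 - 4*a*c)) := by
        have hid : 4*(a^2*(x₁ - x₂)^2 - (b^2 - 4*a*c))
            = ((2*a*x₁ + b) - (2*a*x₂ + b))^2 - 4*(b^2 - 4*a*c) := by ring
        rw [hid]
        exact dvd_sub hsq (hcase.mul_left 4)
      have hc4 : IsCoprime m (4:ℤ) := by
        have h := (coprime_pow_two hp hodd e).mul_right (coprime_pow_two hp hodd e)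
        have h22 : (2:ℤ) * 2 = 4 := by norm_num
        rwa [h22] at h
      exact hc4.dvd_of_dvd_mul_left h4
    · -- v_p(D) = 2β < e
      set y₁ := 2*a*x₁ + b with hy₁def
      set y₂ := 2*a*x₂ + b with hy₂def
      have hy₁0 : y₁ ≠ 0 := by
        rintro h0
        apply hcase
        have : m ∣ -(b^2 - 4*a*c) := by
          have := hy₁
          rw [h0] at this
          simpa using this
        exact (dvd_neg.mp this)
      set β := (y₁.natAbs).factorization p with hβdef
      have hn1 : y₁.natAbs ≠ 0 := by simpa using hy₁0
      have hb1 : (p:ℤ)^β ∣ y₁ := by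
        rw [cast_pow_dvd_iff]
        exact Nat.ordProj_dvd _ _
      have hb2 : ¬ (p:ℤ)^(β+1) ∣ y₁ := by
        rw [cast_pow_dvd_iff, hp.pow_dvd_iff_le_factorization hn1]
        omega
      have h2βe : 2*β < e := by
        by_contra hcon
        push_neg at hcon
        apply hcase
        have hsq1 : (p:ℤ)^(2*β) ∣ y₁^2 := by
          have := pow_dvd_pow_of_dvd hb1 2
          rwa [← pow_mul, mul_comm β 2] at this
        have he1 : m ∣ y₁^2 := hmdef ▸ dvd_trans (pow_dvd_pow _ hcon) hsq1
        have : m ∣ y₁^2 - (y₁^2 - (b^2 - 4*a*c)) := dvd_sub he1 hy₁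
        simpa using this
      have hDβ : (p:ℤ)^(2*β) ∣ (b^2 - 4*a*c) := by
        have hsq1 : (p:ℤ)^(2*β) ∣ y₁^2 := by
          have := pow_dvd_pow_of_dvd hb1 2
          rwa [← pow_mul, mul_comm β 2] at this
        have h2 : (p:ℤ)^(2*β) ∣ y₁^2 - (b^2 - 4*a*c) :=
          dvd_trans (pow_dvd_pow _ (by omega)) (hmdef ▸ hy₁)
        have := dvd_sub hsq1 h2
        simpa using this
      have hDβ1 : ¬ (p:ℤ)^(2*β+1) ∣ (b^2 - 4*a*c) := by
        intro hcon
        apply not_pow_succ_dvd_sq hp hb2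
        have h2 : (p:ℤ)^(2*β+1) ∣ y₁^2 - (b^2 - 4*a*c) :=
          dvd_trans (pow_dvd_pow _ (by omega)) (hmdef ▸ hy₁)
        have := dvd_add hcon h2
        simpa using this
      -- valuation of y₂ is also β
      have hb1' : (p:ℤ)^β ∣ y₂ := by
        have hsq2 : (p:ℤ)^(2*β) ∣ y₂^2 := by
          have h2 : (p:ℤ)^(2*β) ∣ y₂^2 - (b^2 - 4*a*c) :=
            dvd_trans (pow_dvd_pow _ (by omega)) (hmdef ▸ hy₂)
          have := dvd_add hDβ h2
          simpa using this
        have := pow_dvd_of_dvd_sq hp hsq2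
        rwa [show (2*β+1)/2 = β from by omega] at this
      have hb2' : ¬ (p:ℤ)^(β+1) ∣ y₂ := by
        intro hcon
        apply hDβ1
        have hsq2 : (p:ℤ)^(2*β+1) ∣ y₂^2 := by
          have := pow_dvd_pow_of_dvd hcon 2
          rw [← pow_mul] at this
          exact dvd_trans (pow_dvd_pow _ (by omega)) this
        have h2 : (p:ℤ)^(2*β+1) ∣ y₂^2 - (b^2 - 4*a*c) :=
          dvd_trans (pow_dvd_pow _ (by omega)) (hmdef ▸ hy₂)
        have := dvd_sub hsq2 h2
        simpa using this
      have hn2y : ¬ (p:ℤ)^(β+1) ∣ 2*y₁ := by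
        intro hcon
        exact hb2 ((coprime_pow_two hp hodd (β+1)).symm.symm.dvd_of_dvd_mul_left hcon)
      have hprod : m ∣ (y₁ - y₂) * (y₁ + y₂) := by
        have hid : (y₁ - y₂) * (y₁ + y₂)
            = (y₁^2 - (b^2 - 4*a*c)) - (y₂^2 - (b^2 - 4*a*c)) := by ring
        rw [hid]
        exact dvd_sub hy₁ hy₂
      by_cases hsum : (p:ℤ)^(e-β) ∣ y₁ + y₂
      · -- good pair: conclude
        have h4 : m ∣ 4*(a^2*(x₁ - x₂)^2 - (b^2 - 4*a*c)) := by
          have hid : 4*(a^2*(x₁ - x₂)^2 - (b^2 - 4*a*c))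
              = (y₁ + y₂)^2 - (4*y₂)*(y₁ + y₂) + 4*(y₂^2 - (b^2 - 4*a*c)) := by
            rw [hy₁def, hy₂def]; ring
          rw [hid]
          refine dvd_add (dvd_sub ?_ ?_) ((hmdef ▸ hy₂).mul_left 4)
          · have h' : ((p:ℤ)^(e-β))^2 ∣ (y₁ + y₂)^2 := pow_dvd_pow_of_dvd hsum 2
            refine dvd_trans ?_ h'
            rw [← pow_mul, hmdef]
            exact pow_dvd_pow _ (by omega)
          · have hsplit : m = (p:ℤ)^β * (p:ℤ)^(e-β) := by
              rw [hmdef, ← pow_add]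
              congr 1
              omega
            rw [hsplit]
            exact mul_dvd_mul (hb1'.mul_left 4) hsum
        have hc4 : IsCoprime m (4:ℤ) := by
          have h := (coprime_pow_two hp hodd e).mul_right (coprime_pow_two hp hodd e)
          have h22 : (2:ℤ) * 2 = 4 := by norm_num
          rwa [h22] at h
        exact hc4.dvd_of_dvd_mul_left h4
      · -- bad pair: contradiction with minimality
        exfalso
        have hdiff : (p:ℤ)^(e-β) ∣ y₁ - y₂ := by
          by_cases hs1 : (p:ℤ)^(β+1) ∣ y₁ + y₂
          · exfalso
            apply hsum
            have hnd : ¬ (p:ℤ)^(β+1) ∣ y₁ - y₂ := by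
              intro hcon
              apply hn2y
              have hid : 2*y₁ = (y₁ - y₂) + (y₁ + y₂) := by ring
              rw [hid]
              exact dvd_add hcon hs1
            exact pow_dvd_of_dvd_mul hp (hmdef ▸ hprod) hnd
          · exact pow_dvd_of_dvd_mul hp (by rw [mul_comm] at hprod; exact hmdef ▸ hprod) hs1
        have htd : (p:ℤ)^(e-β) ∣ (x₁ - x₂) := by
          apply (coprime_pow_two_a hp hodd hpa (e-β)).dvd_of_dvd_mul_left
          have hid : (2*a)*(x₁ - x₂) = y₁ - y₂ := by rw [hy₁def, hy₂def]; ring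
          rw [hid]
          exact hdiff
        have hdd : (p:ℤ)^(e-β) ∣ (d:ℤ) := by
          rcases hdt with h | h
          · have h' : (p:ℤ)^(e-β) ∣ (d:ℤ) - (x₁ - x₂) :=
              dvd_trans (pow_dvd_pow _ (by omega)) (hmdef ▸ h)
            have := dvd_add h' htd
            simpa using this
          · have h' : (p:ℤ)^(e-β) ∣ (d:ℤ) + (x₁ - x₂) :=
              dvd_trans (pow_dvd_pow _ (by omega)) (hmdef ▸ h)
            have := dvd_sub h' htd
            simpa using this
        have hdge : (p:ℤ)^(e-β) ≤ (d:ℤ) := Int.le_of_dvd (by exact_mod_cast hd1) hdd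
        -- construct a closer pair
        obtain ⟨u, v, huv⟩ := coprime_pow_two_a hp hodd hpa e
        set cc := v*(2*y₁) with hccdef
        have hac : m ∣ a*cc - y₁ := by
          have h2 : m ∣ 2*(a*cc - y₁) :=
            ⟨-(2*y₁*u), by rw [hccdef]; linear_combination (2*y₁)*huv⟩
          exact (coprime_pow_two hp hodd e).dvd_of_dvd_mul_left h2
        set N := (p:ℤ)^(e-β) with hNdef
        have hN0 : 0 < N := pow_pos (by exact_mod_cast hp.pos) _
        set r := rep N cc with hrdef
        have hr1 : 1 ≤ r := rep_one_le hN0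
        have hrle : r ≤ N := rep_le hN0
        have hrc : N ∣ r - cc := rep_dvd_sub N cc
        have hNm : N ∣ m := by
          rw [hNdef, hmdef]
          exact pow_dvd_pow _ (by omega)
        have hrN : r < N := by
          rcases lt_or_eq_of_le hrle with h | h
          · exact h
          · exfalso
            apply hb2
            have hNc : N ∣ cc := by
              have : N ∣ r := h ▸ dvd_refl N
              have := dvd_sub this hrc
              simpa using this
            have hNy : N ∣ y₁ := by
              have h1 : N ∣ a*cc := hNc.mul_left a
              have := dvd_sub h1 (dvd_trans hNm hac)
              simpa using this
            exact dvd_trans (pow_dvd_pow _ (by omega : β + 1 ≤ e - β)) hNy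
        have hbr : (p:ℤ)^β ∣ r := by
          have h1 : (p:ℤ)^β ∣ cc := by
            have hac' : (p:ℤ)^β ∣ a*cc := by
              have h2 : (p:ℤ)^β ∣ a*cc - y₁ :=
                dvd_trans (pow_dvd_pow _ (by omega)) (hmdef ▸ hac)
              have := dvd_add hb1 h2
              have hid : y₁ + (a*cc - y₁) = a*cc := by ring
              rwa [hid] at this
            exact (coprime_pow_a hp hpa β).dvd_of_dvd_mul_left hac'
          have h2 : (p:ℤ)^β ∣ r - cc :=
            dvd_trans (pow_dvd_pow _ (by omega : β ≤ e - β)) (hNdef ▸ hrc)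
          have := dvd_add h2 h1
          have hid : (r - cc) + cc = r := by ring
          rwa [hid] at this
        have hyroot : m ∣ (2*a*r - y₁)^2 - (b^2 - 4*a*c) := by
          have hav : N ∣ a*r - y₁ := by
            have hid : a*r - y₁ = a*(r - cc) + (a*cc - y₁) := by ring
            rw [hid]
            exact dvd_add (hrc.mul_left a) (dvd_trans hNm hac)
          have hkey : m ∣ r*(a*r - y₁) := by
            have hsplit : m = (p:ℤ)^β * N := by
              rw [hNdef, hmdef, ← pow_add]
              congr 1
              omega
            rw [hsplit]
            exact mul_dvd_mul hbr hav
          have hid : (2*a*r - y₁)^2 - (b^2 - 4*a*c)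
              = (y₁^2 - (b^2 - 4*a*c)) + (4*a)*(r*(a*r - y₁)) := by rw [hy₁def]; ring
          rw [hid]
          exact dvd_add hy₁ (hkey.mul_left _)
        obtain ⟨X, hX, hXy⟩ := exists_root a b c hp hodd hpa e _ hyroot
        obtain ⟨X', hX', hXy'⟩ := exists_root a b c hp hodd hpa e (-y₁)
          (by have hid : (-y₁)^2 - (b^2-4*a*c) = y₁^2 - (b^2-4*a*c) := by ring
              rw [hid]; exact hy₁)
        have hXX : m ∣ (X - X') - r := by
          apply (coprime_pow_two_a hp hodd hpa e).dvd_of_dvd_mul_left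
          have hid : (2*a)*((X - X') - r)
              = ((2*a*X + b) - (2*a*r - y₁)) - ((2*a*X' + b) - (-y₁)) := by ring
          rw [hid]
          exact dvd_sub (hmdef ▸ hXy) (hmdef ▸ hXy')
        have hrm : r ≤ m := le_trans hrle (Int.le_of_dvd hm hNm)
        have hrepeq : rep m (X - X') = r := rep_eq hm hr1 hrm hXX
        have hpdle : pairDist m X X' ≤ r :=
          le_trans (min_le_left _ _) (le_of_eq hrepeq)
        have hmdle : minDist (fun x => a*x^2 + b*x + c) p e
            ≤ ((pairDist ((p:ℤ)^e) X X').toNat : ℕ∞) := minDist_le _ p e hne hX hX'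
        rw [hd] at hmdle
        have hdn : d ≤ (pairDist ((p:ℤ)^e) X X').toNat := by exact_mod_cast hmdle
        have hdz : (d:ℤ) ≤ pairDist m X X' := by
          have h0 : 0 ≤ pairDist m X X' := le_trans zero_le_one (one_le_pairDist hm)
          have := Int.toNat_of_nonneg h0
          rw [hmdef]
          omega
        have : N ≤ (d:ℤ) := hdge
        omega
  refine ⟨?_, part3 d hd1 hdk, part3⟩
  have hid : a^2*(d:ℤ)^2 - (b^2 - 4*a*c)
      = a^2*((d:ℤ)^2 - (x₁ - x₂)^2) + (a^2*(x₁ - x₂)^2 - (b^2 - 4*a*c)) := by ring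
  rw [hid]
  exact dvd_add (hdsq.mul_left _) hat
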